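/- Let p ≥ 2 be an integer, Σ a finite set with bijection Frob, and k ∈ ℤ^Σ with k_τ > 0 for all τ. Define M ⊆ Σ to be the set of τ such that there exists s ≥ 1 with k_{Frob⁻¹∘τ} = ⋯ = k_{Frob^{1−s}∘τ} = 2 and k_{Frob^{−s}∘τ} = 1. Define k' = k + Σ_{τ∈M} (p·e_{Frob⁻¹∘τ} − e_τ). Then k'_τ ≥ 2 for all τ ∈ Σ, i.e. k' is algebraic. -/

import Mathlib

/-- The set `M`: `τ` such that for some `s ≥ 1`, `k (Frob⁻ʲ τ) = 2` for `1 ≤ j ≤ s-1`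
and `k (Frob⁻ˢ τ) = 1`. -/
def MPred {S : Type*} (Frob : Equiv.Perm S) (k : S → ℤ) (τ : S) : Prop :=
  ∃ s : ℕ, 1 ≤ s ∧ (∀ j : ℕ, 1 ≤ j → j < s → k ((⇑Frob.symm)^[j] τ) = 2) ∧
    k ((⇑Frob.symm)^[s] τ) = 1

/-- The set `M̃`. -/
def MtPred {S : Type*} (Frob : Equiv.Perm S) (k : S → ℤ) (τ : S) : Prop :=
  (3 ≤ k τ ∧ MPred Frob k τ) ∨
  (k τ = 2 ∧ k (Frob.symm τ) = 1 ∧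
    (k ((⇑Frob.symm)^[2] τ) = 1 ∨ k ((⇑Frob.symm)^[2] τ) = 2) ∧
    (k ((⇑Frob.symm)^[2] τ) = 2 → MPred Frob k ((⇑Frob.symm)^[2] τ)))

/-- The weight `k_{Ha_τ} = p·e_{Frob⁻¹∘τ} − e_τ` of the partial Hasse invariant. -/
def kHa {S : Type*} [DecidableEq S] (p : ℕ) (Frob : Equiv.Perm S) (τ : S) : S → ℤ :=
  (p : ℤ) • Pi.single (Frob.symm τ) (1 : ℤ) - Pi.single τ (1 : ℤ)

/-!
At `τ` the correction `∑_{σ ∈ M} k_{Ha_σ}` contributes `p·[Frob τ ∈ M] - [τ ∈ M]`. The only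
danger is `k τ ≤ 2` with `Frob τ ∉ M`; but `k τ = 1` puts `Frob τ` in `M` (take `s = 1`), and
`k τ = 2` with `τ ∈ M` does too (prolong the run of 2's by one step). Otherwise `p ≥ 2` absorbs
the loss of `1`.
-/

section

variable {S : Type*} (Frob : Equiv.Perm S) (k : S → ℤ)

theorem MPred.frob_of_eq_one {τ : S} (h1 : k τ = 1) : MPred Frob k (Frob τ) :=
  ⟨1, le_rfl, fun _ hj hj' => absurd hj' (not_lt.2 hj), by simpa using h1⟩

theorem MPred.frob_of_eq_two {τ : S} (h2 : k τ = 2) (h : MPred Frob k τ) :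
    MPred Frob k (Frob τ) := by
  obtain ⟨s, hs, hmid, hend⟩ := h
  refine ⟨s + 1, by omega, fun j hj hjs => ?_, by simpa using hend⟩
  obtain ⟨m, rfl⟩ : ∃ m, j = m + 1 := ⟨j - 1, by omega⟩
  rw [Function.iterate_succ_apply, Equiv.symm_apply_apply]
  rcases Nat.eq_zero_or_pos m with rfl | hm
  · exact h2
  · exact hmid m hm (by omega)

end

theorem kHa_apply {S : Type*} [DecidableEq S] (p : ℕ) (Frob : Equiv.Perm S) (σ τ : S) :
    kHa p Frob σ τ = (if Frob τ = σ then (p : ℤ) else 0) - if τ = σ then 1 else 0 := by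
  simp only [kHa, Pi.sub_apply, Pi.smul_apply, Pi.single_apply, Equiv.eq_symm_apply,
    smul_eq_mul, mul_ite, mul_one, mul_zero]

theorem sum_kHa_apply {S : Type*} [DecidableEq S] (p : ℕ) (Frob : Equiv.Perm S)
    (M : Finset S) (τ : S) :
    (∑ σ ∈ M, kHa p Frob σ) τ = (if Frob τ ∈ M then (p : ℤ) else 0) - if τ ∈ M then 1 else 0 := by
  simp only [Finset.sum_apply, kHa_apply, Finset.sum_sub_distrib, Finset.sum_ite_eq]

theorem kprime_algebraic_general {S : Type*} [DecidableEq S] (p : ℕ) (hp : 2 ≤ p)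
    (Frob : Equiv.Perm S) (k : S → ℤ) (hpos : ∀ τ : S, 0 < k τ)
    (M : Finset S) (hM : ∀ τ : S, τ ∈ M ↔ MPred Frob k τ)
    (k' : S → ℤ) (hk' : k' = k + ∑ τ ∈ M, kHa p Frob τ) :
    ∀ τ : S, 2 ≤ k' τ := by
  intro τ
  have hp' : (2 : ℤ) ≤ p := by exact_mod_cast hp
  have hk := hpos τ
  have hk1 : Frob τ ∉ M → k τ ≠ 1 := fun hF h1 =>
    hF ((hM _).2 (MPred.frob_of_eq_one Frob k h1))
  rw [hk', Pi.add_apply, sum_kHa_apply]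
  split_ifs with hF hτ hτ
  · linarith
  · linarith
  · have hk2 : k τ ≠ 2 := fun h2 => hF ((hM _).2 (MPred.frob_of_eq_two Frob k h2 ((hM τ).1 hτ)))
    have := hk1 hF
    omega
  · have := hk1 hF
    omega

/-- The weight `k' = k + ∑_{τ ∈ M} k_{Ha_τ}` is algebraic. -/
theorem kprime_algebraic {S : Type*} [Fintype S] [DecidableEq S] (p : ℕ) (hp : 2 ≤ p)
    (Frob : Equiv.Perm S) (k : S → ℤ) (hpos : ∀ τ : S, 0 < k τ)
    (M : Finset S) (hM : ∀ τ : S, τ ∈ M ↔ MPred Frob k τ)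
    (k' : S → ℤ) (hk' : k' = k + ∑ τ ∈ M, kHa p Frob τ) :
    ∀ τ : S, 2 ≤ k' τ :=
  kprime_algebraic_general p hp Frob k hpos M hM k' hk'
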